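/- arXiv:1904.06888 — 2 statements merged into one kernel-verified Lean document; each statement's English description precedes it below -/
import Mathlib

section
/- Let α ∈ V* be nonzero and β ∈ Λ^k V* with α ∧ β = 0. Then there exists γ ∈ Λ^{k−1} V* with β = α ∧ γ (division lemma / Cartan's lemma for a single 1-form). -/
open ExteriorAlgebra

lemma contractLeft_mem_exteriorPower {K M : Type*} [Field K] [AddCommGroup M] [Module K M]
    (f : Module.Dual K M) :
    ∀ (k : ℕ) (x : ExteriorAlgebra K M), x ∈ ⋀[K]^(k+1) M →
      CliffordAlgebra.contractLeft (Q := (0 : QuadraticForm K M)) f x ∈ ⋀[K]^k M := by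
  intro k
  induction k with
  | zero =>
    intro x hx
    replace hx : x ∈ (LinearMap.range (ι K : M →ₗ[K] ExteriorAlgebra K M)) ^ (0 + 1) := hx
    rw [zero_add, pow_one] at hx
    obtain ⟨v, rfl⟩ := hx
    rw [show (ι K v : ExteriorAlgebra K M) = CliffordAlgebra.ι 0 v from rfl,
      CliffordAlgebra.contractLeft_ι]
    show _ ∈ (LinearMap.range (ι K : M →ₗ[K] ExteriorAlgebra K M)) ^ 0
    rw [pow_zero]
    exact Submodule.algebraMap_mem (f v)
  | succ k ih =>
    intro x hx
    replace hx : x ∈ (LinearMap.range (ι K : M →ₗ[K] ExteriorAlgebra K M)) ^ (k + 1 + 1) := hx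
    rw [pow_succ'] at hx
    refine Submodule.mul_induction_on hx ?_ ?_
    · rintro m ⟨v, rfl⟩ y hy
      rw [show (ι K v : ExteriorAlgebra K M) = CliffordAlgebra.ι 0 v from rfl,
        CliffordAlgebra.contractLeft_ι_mul]
      refine Submodule.sub_mem _ (Submodule.smul_mem _ _ hy) ?_
      show _ ∈ (LinearMap.range (ι K : M →ₗ[K] ExteriorAlgebra K M)) ^ (k + 1)
      rw [pow_succ']
      exact Submodule.mul_mem_mul ⟨v, rfl⟩ (ih y hy)
    · intro a b ha hb
      rw [map_add]
      exact Submodule.add_mem _ ha hb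

/-- division lemma / Cartan's lemma for a single 1-form.
Let `V` be a finite-dimensional vector space over a field `K`, `α ∈ V*` a
nonzero 1-form and `β ∈ Λ^{k+1} V*` with `α ∧ β = 0`.  Then there exists
`γ ∈ Λ^k V*` with `β = α ∧ γ`.  (The exponent `k` of the statement, with
`k ≥ 1`, is written here as `k + 1`.) -/
theorem one_form_division {K V : Type*} [Field K]
    [AddCommGroup V] [Module K V] [FiniteDimensional K V] {k : ℕ}
    (α : Module.Dual K V) (hα : α ≠ 0)
    (β : ⋀[K]^(k + 1) (Module.Dual K V))
    (hβ : ι K α * (β : ExteriorAlgebra K (Module.Dual K V)) = 0) :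
    ∃ γ : ⋀[K]^k (Module.Dual K V),
      (β : ExteriorAlgebra K (Module.Dual K V))
        = ι K α * (γ : ExteriorAlgebra K (Module.Dual K V)) := by
  -- choose a dual functional f with f α = 1
  have : ¬ ∀ φ : Module.Dual K (Module.Dual K V), φ α = 0 := by
    rw [Module.forall_dual_apply_eq_zero_iff]; exact hα
  push_neg at this
  obtain ⟨φ, hφ⟩ := this
  set f := (φ α)⁻¹ • φ with hf
  have hfα : f α = 1 := by
    simp [hf, inv_mul_cancel₀ hφ]
  have c : ExteriorAlgebra K (Module.Dual K V) :=
    CliffordAlgebra.contractLeft (Q := (0 : QuadraticForm K (Module.Dual K V))) f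
      (β : ExteriorAlgebra K (Module.Dual K V))
  refine ⟨⟨CliffordAlgebra.contractLeft (Q := (0 : QuadraticForm K (Module.Dual K V))) f
      (β : ExteriorAlgebra K (Module.Dual K V)),
    contractLeft_mem_exteriorPower f k _ β.2⟩, ?_⟩
  have key := CliffordAlgebra.contractLeft_ι_mul (Q := (0 : QuadraticForm K (Module.Dual K V)))
    (d := f) α (β : ExteriorAlgebra K (Module.Dual K V))
  rw [show CliffordAlgebra.ι (0 : QuadraticForm K (Module.Dual K V)) α = ι K α from rfl,
    hβ, map_zero, hfα, one_smul] at key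
  exact sub_eq_zero.mp key.symm
end

section
/- Let A ∈ 𝔤𝔩ₙ(𝕂) be a non-resonant diagonal matrix (eigenvalues λ₁,…,λₙ with Σ mᵢλᵢ − λⱼ ≠ 0 for all multi-indices m with |m| ≥ 2). Let X⁽¹⁾ = Σ λᵢ xᵢ ∂/∂xᵢ be the corresponding linear vector field. Then for every formal vector field Ỹ on 𝕂ⁿ whose Taylor expansion contains only terms of degree ≥ 2, there exists a formal vector field Z̃ with terms of degree ≥ 2 such that Ỹ = [X⁽¹⁾, Z̃]. -/
/-!
In the monomial basis `ad_{X⁽¹⁾}` is diagonal: `x^m ∂/∂xⱼ` is an eigenvector with eigenvalue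
`⟨m, λ⟩ - λⱼ`, because the Euler-type operator `xᵢ ∂/∂xᵢ` multiplies `x^m` by `mᵢ`. Non-resonance
says these eigenvalues do not vanish in degree `≥ 2`, so `Z̃` is obtained by dividing each
coefficient of `Ỹ` by the corresponding eigenvalue.
-/

noncomputable section

/-- The partial derivative `∂f/∂xᵢ` of a formal power series. -/
def psDeriv {K : Type*} [Field K] {n : ℕ} (i : Fin n)
    (f : MvPowerSeries (Fin n) K) : MvPowerSeries (Fin n) K :=
  fun m => (m i + 1 : ℕ) • MvPowerSeries.coeff (R := K) (m + Finsupp.single i 1) f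

open MvPowerSeries

namespace PoincareDulac

variable {K : Type*} [Field K] {n : ℕ}

theorem coeff_X_mul_psDeriv (i : Fin n) (f : MvPowerSeries (Fin n) K) (m : Fin n →₀ ℕ) :
    coeff m (X i * psDeriv i f) = (m i : K) * coeff m f := by
  classical
  rw [X_def, coeff_monomial_mul, one_mul]
  split_ifs with hle
  · have hmi : (m - Finsupp.single i 1 : Fin n →₀ ℕ) i + 1 = m i := by
      have := Finsupp.single_le_iff.mp hle
      rw [Finsupp.tsub_apply, Finsupp.single_eq_same]
      omega
    rw [coeff_apply, psDeriv, tsub_add_cancel_of_le hle, hmi, nsmul_eq_mul]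
  · have hmi : m i = 0 := by
      rw [Finsupp.single_le_iff] at hle
      omega
    rw [hmi, Nat.cast_zero, zero_mul]

/-- The eigenvalue `⟨m, λ⟩ - λⱼ` of `ad_{X⁽¹⁾}` on the monomial field `x^m ∂/∂xⱼ`. -/
def adEigenvalue (lam : Fin n → K) (m : Fin n →₀ ℕ) (j : Fin n) : K :=
  (∑ i, (m i : K) * lam i) - lam j

/-- The `j`-th component of `[X⁽¹⁾, Z]` for `X⁽¹⁾ = Σ λᵢ xᵢ ∂/∂xᵢ`. -/
def linearFieldBracket (lam : Fin n → K) (Z : Fin n → MvPowerSeries (Fin n) K) (j : Fin n) :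
    MvPowerSeries (Fin n) K :=
  (∑ i, C (lam i) * (X i * psDeriv i (Z j))) - C (lam j) * Z j

theorem coeff_linearFieldBracket (lam : Fin n → K) (Z : Fin n → MvPowerSeries (Fin n) K)
    (j : Fin n) (m : Fin n →₀ ℕ) :
    coeff m (linearFieldBracket lam Z j) = adEigenvalue lam m j * coeff m (Z j) := by
  simp only [linearFieldBracket, adEigenvalue, map_sub, map_sum, coeff_C_mul,
    coeff_X_mul_psDeriv, sub_mul, Finset.sum_mul]
  congr 1
  exact Finset.sum_congr rfl fun i _ => by ring

/-- Where the eigenvalue vanishes, `x / 0 = 0` makes the coefficient `0`. -/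
def linearFieldBracketPreimage (lam : Fin n → K) (Y : Fin n → MvPowerSeries (Fin n) K)
    (j : Fin n) : MvPowerSeries (Fin n) K :=
  fun m => coeff m (Y j) / adEigenvalue lam m j

theorem coeff_linearFieldBracketPreimage (lam : Fin n → K)
    (Y : Fin n → MvPowerSeries (Fin n) K) (j : Fin n) (m : Fin n →₀ ℕ) :
    coeff m (linearFieldBracketPreimage lam Y j) = coeff m (Y j) / adEigenvalue lam m j :=
  rfl

theorem linearFieldBracket_preimage (lam : Fin n → K) (Y : Fin n → MvPowerSeries (Fin n) K)
    (hY : ∀ j m, adEigenvalue lam m j = 0 → coeff m (Y j) = 0) (j : Fin n) :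
    linearFieldBracket lam (linearFieldBracketPreimage lam Y) j = Y j := by
  ext m
  rw [coeff_linearFieldBracket, coeff_linearFieldBracketPreimage]
  by_cases hm : adEigenvalue lam m j = 0
  · rw [hm, hY j m hm, zero_mul]
  · exact mul_div_cancel₀ _ hm

end PoincareDulac

open PoincareDulac

/-- Poincaré–Dulac in the non-resonant case.  Let
`λ₁, …, λₙ` be non-resonant: `Σᵢ mᵢλᵢ − λⱼ ≠ 0` for every multi-index `m` with
`|m| ≥ 2` and every `j`, and let `X⁽¹⁾ = Σ λᵢ xᵢ ∂/∂xᵢ` be the corresponding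
linear vector field.  Then for every formal vector field `Ỹ = (Y₁, …, Yₙ)` on
`Kⁿ` all of whose components contain only terms of degree `≥ 2`, there exists a
formal vector field `Z̃` with terms of degree `≥ 2` such that
`Ỹ = [X⁽¹⁾, Z̃]`, i.e. componentwise `Yⱼ = Σᵢ λᵢ xᵢ ∂Zⱼ/∂xᵢ − λⱼ Zⱼ`. -/
theorem poincare_dulac_nonresonant {K : Type*} [Field K] {n : ℕ}
    (lam : Fin n → K)
    (hres : ∀ m : Fin n →₀ ℕ, 2 ≤ m.sum (fun _ e => e) → ∀ j : Fin n,
      (∑ i, (m i : K) * lam i) - lam j ≠ 0)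
    (Y : Fin n → MvPowerSeries (Fin n) K)
    (hY : ∀ (j : Fin n) (m : Fin n →₀ ℕ), m.sum (fun _ e => e) < 2 →
      MvPowerSeries.coeff (R := K) m (Y j) = 0) :
    ∃ Z : Fin n → MvPowerSeries (Fin n) K,
      (∀ (j : Fin n) (m : Fin n →₀ ℕ), m.sum (fun _ e => e) < 2 →
        MvPowerSeries.coeff (R := K) m (Z j) = 0) ∧
      ∀ j : Fin n,
        Y j = (∑ i, MvPowerSeries.C (σ := Fin n) (R := K) (lam i) *
                (MvPowerSeries.X i * psDeriv i (Z j)))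
              - MvPowerSeries.C (σ := Fin n) (R := K) (lam j) * Z j := by
  have hY_resonant : ∀ j m, adEigenvalue lam m j = 0 → coeff m (Y j) = 0 := fun j m hm =>
    hY j m (not_le.mp fun hdeg => hres m hdeg j hm)
  refine ⟨linearFieldBracketPreimage lam Y, fun j m hm => ?_, fun j => ?_⟩
  · rw [coeff_linearFieldBracketPreimage, hY j m hm, zero_div]
  · exact (linearFieldBracket_preimage lam Y hY_resonant j).symm

end
end
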